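/- arXiv:1705.02622 — 5 statements merged into one kernel-verified Lean document; each statement's English description precedes it below -/
import Mathlib

section
/- For every topological space X, the cellularity of X is at most pd(X), and pd(X) is at most the density of X. -/
open Cardinal Set Topology

universe u v

/-- A neighborhood assignment on a topological space. -/
def NbhdAssign {X : Type u} [TopologicalSpace X] (U : X → Set X) : Prop :=
  ∀ x, IsOpen (U x) ∧ x ∈ U x

/-- The pinning down number of a family of sets: the least cardinality of a set
meeting every nonempty member of the family. -/
noncomputable def pdFam {α : Type u} (𝒜 : Set (Set α)) : Cardinal.{u} :=
  sInf {c | ∃ A : Set α, #A = c ∧ ∀ S ∈ 𝒜, S.Nonempty → (A ∩ S).Nonempty}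

/-- The pinning down number of a neighborhood assignment. -/
noncomputable def pdAssign {X : Type u} [TopologicalSpace X] (U : X → Set X) : Cardinal.{u} :=
  sInf {c | ∃ A : Set X, #A = c ∧ ∀ x, (A ∩ U x).Nonempty}

/-- The pinning down number of a topological space. -/
noncomputable def pdSpace (X : Type u) [TopologicalSpace X] : Cardinal.{u} :=
  ⨆ U : {U : X → Set X // NbhdAssign U}, pdAssign U.1

/-- The density of a topological space. -/
noncomputable def density (X : Type u) [TopologicalSpace X] : Cardinal.{u} :=
  sInf {c | ∃ D : Set X, #D = c ∧ Dense D}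

/-- The cellularity of a topological space. -/
noncomputable def cellularity (X : Type u) [TopologicalSpace X] : Cardinal.{u} :=
  ⨆ 𝒞 : {C : Set (Set X) // (∀ U ∈ C, IsOpen U ∧ U.Nonempty) ∧ C.PairwiseDisjoint id}, #𝒞.1

/-- `Δ(X)`: the least cardinality of a nonempty open subset of `X`. -/
noncomputable def Delta (X : Type u) [TopologicalSpace X] : Cardinal.{u} :=
  sInf {c | ∃ G : Set X, IsOpen G ∧ G.Nonempty ∧ #G = c}

/-- A space is neat if `Δ(X) = |X|`. -/
def Neat (X : Type u) [TopologicalSpace X] : Prop := Delta X = #X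

/-- `c(X) ≤ pd(X) ≤ d(X)` for every topological space `X`. -/
theorem cellularity_le_pd_le_density (X : Type u) [TopologicalSpace X] :
    cellularity X ≤ pdSpace X ∧ pdSpace X ≤ density X := by
  constructor
  · -- cellularity ≤ pdSpace
    apply ciSup_le'
    rintro ⟨𝒞, h𝒞, hdis⟩
    classical
    set U : X → Set X := fun x =>
      if h : ∃ C ∈ 𝒞, x ∈ C then ⋃₀ {C | C ∈ 𝒞 ∧ x ∈ C} else Set.univ with hU
    have hNA : NbhdAssign U := by
      intro x
      by_cases h : ∃ C ∈ 𝒞, x ∈ C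
      · simp only [hU, dif_pos h]
        refine ⟨isOpen_sUnion (fun C hC => (h𝒞 C hC.1).1), ?_⟩
        obtain ⟨C, hC, hx⟩ := h
        exact ⟨C, ⟨hC, hx⟩, hx⟩
      · simp only [hU, dif_neg h]
        exact ⟨isOpen_univ, Set.mem_univ x⟩
    have key : #𝒞 ≤ pdAssign U := by
      apply le_csInf
      · exact ⟨#(Set.univ : Set X), Set.univ, rfl,
          fun x => ⟨x, Set.mem_univ x, (hNA x).2⟩⟩
      rintro c ⟨A, rfl, hA⟩
      have meets : ∀ C ∈ 𝒞, (A ∩ C).Nonempty := by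
        intro C hC
        obtain ⟨x, hx⟩ := (h𝒞 C hC).2
        have hx' : ∃ C' ∈ 𝒞, x ∈ C' := ⟨C, hC, hx⟩
        obtain ⟨a, haA, haU⟩ := hA x
        refine ⟨a, haA, ?_⟩
        simp only [hU, dif_pos hx'] at haU
        obtain ⟨C', ⟨hC', hxC'⟩, haC'⟩ := haU
        have hCC : C' = C := by
          by_contra hne
          exact Set.disjoint_left.mp (hdis hC' hC hne) hxC' hx
        rwa [hCC] at haC'
      choose f hfA hfC using meets
      have hinj : Function.Injective
          (fun C : 𝒞 => (⟨f C C.2, hfA C C.2⟩ : A)) := by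
        rintro ⟨C, hC⟩ ⟨C', hC'⟩ h
        simp only [Subtype.mk_eq_mk] at h ⊢
        by_contra hne
        exact Set.disjoint_left.mp (hdis hC hC' hne) (hfC C hC)
          (h ▸ hfC C' hC')
      exact Cardinal.mk_le_of_injective hinj
    exact key.trans (le_ciSup (Cardinal.bddAbove_range _)
      (⟨U, hNA⟩ : {U : X → Set X // NbhdAssign U}))
  · apply ciSup_le'
    rintro ⟨U, hU⟩
    refine le_csInf ⟨#(Set.univ : Set X), Set.univ, rfl, dense_univ⟩ ?_
    rintro c ⟨D, rfl, hD⟩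
    apply csInf_le'
    refine ⟨D, rfl, fun x => ?_⟩
    have h := hD.inter_open_nonempty (U x) (hU x).1 ⟨x, (hU x).2⟩
    rwa [Set.inter_comm] at h
end

section
/- Let X be a neat topological space with pd(X) ≥ ℵ₀, and let κ ≤ pd(X) be a cardinal such that |X^κ| = |X|. Then pd(X^κ) = pd(X). -/
open Cardinal Set Topology

universe u v

section Aux
variable {X : Type u} [TopologicalSpace X]

lemma pdAssign_le_mk (U : X → Set X) (hU : NbhdAssign U) : pdAssign U ≤ #X :=
  csInf_le' ⟨Set.univ, Cardinal.mk_univ, fun x => ⟨x, mem_univ x, (hU x).2⟩⟩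

lemma bddAbove_pdAssign :
    BddAbove (Set.range fun U : {U : X → Set X // NbhdAssign U} => pdAssign U.1) :=
  ⟨#X, by rintro c ⟨U, rfl⟩; exact pdAssign_le_mk U.1 U.2⟩

instance : Nonempty {U : X → Set X // NbhdAssign U} :=
  ⟨⟨fun _ => Set.univ, fun x => ⟨isOpen_univ, mem_univ x⟩⟩⟩

lemma pdAssign_le_pdSpace (U : X → Set X) (hU : NbhdAssign U) : pdAssign U ≤ pdSpace X :=
  le_ciSup bddAbove_pdAssign ⟨U, hU⟩

lemma pdSpace_le_mk : pdSpace X ≤ #X := ciSup_le' fun U => pdAssign_le_mk U.1 U.2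

lemma pdAssign_attained (U : X → Set X) (hU : NbhdAssign U) :
    ∃ D : Set X, #D = pdAssign U ∧ ∀ x, (D ∩ U x).Nonempty := by
  have hne : {c | ∃ A : Set X, #A = c ∧ ∀ x, (A ∩ U x).Nonempty}.Nonempty :=
    ⟨#(Set.univ : Set X), Set.univ, rfl, fun x => ⟨x, mem_univ x, (hU x).2⟩⟩
  obtain ⟨A, hA, hpin⟩ := csInf_mem hne
  exact ⟨A, hA, hpin⟩

lemma mk_open_of_neat (h : Neat X) {G : Set X} (hG : IsOpen G) (hne : G.Nonempty) :
    Cardinal.mk G = #X := by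
  refine le_antisymm (Cardinal.mk_set_le G) ?_
  have : Delta X ≤ #G := csInf_le' ⟨G, hG, hne, rfl⟩
  rwa [h] at this
end Aux

/-- System of distinct representatives for big sets. -/
lemma exists_sdr {α : Type u} (G : α → Set α) (hG : ∀ a, #α ≤ #(G a)) :
    ∃ r : α → α, Function.Injective r ∧ ∀ a, r a ∈ G a := by
  classical
  obtain ⟨rel, wo, hord⟩ := Cardinal.ord_eq α
  have wf : WellFounded rel := wo.wf
  have key : ∀ (t : α) (ih : ∀ s, rel s t → α),
      (G t \ Set.range (fun s : {s // rel s t} => ih s.1 s.2)).Nonempty := by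
    intro t ih
    rw [Set.diff_nonempty]
    intro hsub
    have h1 : #(G t) ≤ #{s // rel s t} :=
      (Cardinal.mk_le_mk_of_subset hsub).trans Cardinal.mk_range_le
    have h3 : #{s // rel s t} < #α := by
      rw [← Ordinal.card_typein (r := rel) t]
      exact card_typein_lt t hord
    exact absurd ((hG t).trans h1) (not_le.2 h3)
  set r : α → α := wf.fix (fun t ih => (key t ih).some) with hrdef
  have hre : ∀ t, r t = (key t (fun s _ => r s)).some :=
    fun t => wf.fix_eq (fun t ih => (key t ih).some) t
  have hr : ∀ t, r t ∈ G t \ Set.range (fun s : {s // rel s t} => r s.1) := by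
    intro t
    rw [hre t]
    exact (key t fun s _ => r s).some_mem
  refine ⟨r, ?_, fun a => (hr a).1⟩
  intro a b hab
  by_contra hne
  rcases trichotomous_of rel a b with h | h | h
  · exact (hr b).2 ⟨⟨a, h⟩, hab⟩
  · exact hne h
  · exact (hr a).2 ⟨⟨b, h⟩, hab.symm⟩

/-- Lemma A: in a neat space, any small family of nonempty open sets can be pinned
by `pdSpace X` many points. -/
lemma exists_pin_family {X : Type u} [TopologicalSpace X] [Nonempty X] (hneat : Neat X)
    {J : Type u} (G : J → Set X) (hJ : #J ≤ #X)
    (hop : ∀ j, IsOpen (G j)) (hne : ∀ j, (G j).Nonempty) :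
    ∃ D : Set X, #D ≤ pdSpace X ∧ ∀ j, (D ∩ G j).Nonempty := by
  classical
  obtain ⟨f⟩ := (Cardinal.le_def J X).1 hJ
  set G' : X → Set X := fun x => if h : ∃ j, f j = x then G h.choose else Set.univ with hG'
  have hop' : ∀ x, IsOpen (G' x) := by
    intro x; simp only [hG']; split
    · exact hop _
    · exact isOpen_univ
  have hne' : ∀ x, (G' x).Nonempty := by
    intro x; simp only [hG']; split
    · exact hne _
    · exact univ_nonempty
  have hbig : ∀ x, #X ≤ #(G' x) :=
    fun x => (mk_open_of_neat hneat (hop' x) (hne' x)).ge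
  obtain ⟨r, hrinj, hrmem⟩ := exists_sdr G' hbig
  set U : X → Set X := fun y => if h : ∃ x, r x = y then G' h.choose else Set.univ with hUdef
  have hUr : ∀ x, U (r x) = G' x := by
    intro x
    simp only [hUdef]; split
    · next h => exact congrArg G' (hrinj h.choose_spec)
    · next h => exact absurd ⟨x, rfl⟩ h
  have hU : NbhdAssign U := by
    intro y
    constructor
    · simp only [hUdef]; split
      · exact hop' _
      · exact isOpen_univ
    · simp only [hUdef]; split
      · next h =>
          have := hrmem h.choose
          rwa [h.choose_spec] at this
      · exact mem_univ y
  obtain ⟨D, hD, hpin⟩ := pdAssign_attained U hU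
  have hDle : #D ≤ pdSpace X := le_trans (le_of_eq hD) (pdAssign_le_pdSpace U hU)
  refine ⟨D, hDle, fun j => ?_⟩
  have h1 : (D ∩ U (r (f j))).Nonempty := hpin (r (f j))
  rw [hUr (f j)] at h1
  have h2 : G' (f j) = G j := by
    simp only [hG']; split
    · next h => exact congrArg G (f.injective h.choose_spec)
    · next h => exact absurd ⟨j, rfl⟩ h
  rwa [h2] at h1

/-- if `X` is neat with `pd(X) ≥ ℵ₀`, `κ = |ι| ≤ pd(X)` and `|X^κ| = |X|`,
then `pd(X^κ)` = pd(X)`. -/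
theorem pd_pow_eq_pd (X : Type u) [TopologicalSpace X] (hneat : Neat X)
    (hinf : ℵ₀ ≤ pdSpace X) (ι : Type u) (κ : Cardinal.{u}) (hκ : #ι = κ)
    (hle : κ ≤ pdSpace X) (hcard : #(ι → X) = #X) :
    pdSpace (ι → X) = pdSpace X := by
  classical
  have hXle : pdSpace X ≤ #X := pdSpace_le_mk
  have hXinf : ℵ₀ ≤ #X := hinf.trans hXle
  haveI hXinfinite : Infinite X := Cardinal.aleph0_le_mk_iff.1 hXinf
  haveI hι : Nonempty ι := by
    by_contra h
    rw [not_nonempty_iff] at h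
    haveI : Unique (ι → X) :=
      ⟨⟨fun i => (h.false i).elim⟩, fun f => funext fun i => (h.false i).elim⟩
    have h1 : #(ι → X) = 1 := Cardinal.mk_eq_one _
    rw [h1] at hcard
    rw [← hcard] at hXinf
    exact absurd hXinf (not_le.2 Cardinal.one_lt_aleph0)
  refine le_antisymm (ciSup_le' ?_) (ciSup_le' ?_)
  · -- pdSpace (ι → X) ≤ pdSpace X
    rintro ⟨V, hV⟩
    have hbasic : ∀ g : ι → X, ∃ (I : Finset ι) (w : ι → Set X),
        (∀ i, i ∈ I → IsOpen (w i) ∧ g i ∈ w i) ∧ (I : Set ι).pi w ⊆ V g :=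
      fun g => isOpen_pi_iff.1 (hV g).1 g (hV g).2
    choose F W hW hsub using hbasic
    set G : (ι → X) × ι → Set X :=
      fun p => if p.2 ∈ F p.1 then W p.1 p.2 else Set.univ with hGdef
    have hJle : #((ι → X) × ι) ≤ #X := by
      have h1 : #((ι → X) × ι) = #(ι → X) * #ι := by
        rw [Cardinal.mk_prod, Cardinal.lift_id, Cardinal.lift_id]
      rw [h1, hcard, hκ]
      calc #X * κ ≤ #X * #X := mul_le_mul_right (hle.trans hXle) _
        _ = #X := Cardinal.mul_eq_self hXinf
    have hGop : ∀ p, IsOpen (G p) := by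
      intro p; simp only [hGdef]; split
      · next hp => exact (hW p.1 p.2 hp).1
      · exact isOpen_univ
    have hGne : ∀ p, (G p).Nonempty := by
      intro p; simp only [hGdef]; split
      · next hp => exact ⟨p.1 p.2, (hW p.1 p.2 hp).2⟩
      · exact univ_nonempty
    obtain ⟨D, hDle, hDpin⟩ := exists_pin_family hneat G hJle hGop hGne
    let x₀ : X := Classical.arbitrary X
    let pinL : List (ι × X) → ι → X := fun l i =>
      ((l.find? (fun p => decide (p.1 = i))).map Prod.snd).getD x₀
    set A : Set (ι → X) :=
      Set.range (fun l : List (ι × ↥D) => pinL (l.map (fun p => (p.1, p.2.1)))) with hAdef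
    have hAcard : #A ≤ pdSpace X := by
      refine le_trans Cardinal.mk_range_le ?_
      refine le_trans (Cardinal.mk_list_le_max _) ?_
      have h2 : #(ι × ↥D) ≤ pdSpace X := by
        rw [Cardinal.mk_prod, Cardinal.lift_id, Cardinal.lift_id, hκ]
        calc κ * #D ≤ pdSpace X * pdSpace X := mul_le_mul' hle hDle
          _ = pdSpace X := Cardinal.mul_eq_self hinf
      exact max_le hinf h2
    refine le_trans (csInf_le' ⟨A, rfl, ?_⟩) hAcard
    intro g
    have hd : ∀ i : ι, ∃ x, x ∈ D ∧ (i ∈ F g → x ∈ W g i) := by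
      intro i
      by_cases hi : i ∈ F g
      · obtain ⟨x, hxD, hxG⟩ := hDpin (g, i)
        refine ⟨x, hxD, fun _ => ?_⟩
        simpa only [hGdef, if_pos hi] using hxG
      · obtain ⟨x, hxD, _⟩ := hDpin (g, i)
        exact ⟨x, hxD, fun h' => absurd h' hi⟩
    choose d hdD hdW using hd
    set l₀ : List (ι × ↥D) := (F g).toList.map (fun i => (i, ⟨d i, hdD i⟩)) with hl0
    refine ⟨pinL (l₀.map (fun p => (p.1, p.2.1))), ⟨l₀, rfl⟩, ?_⟩
    apply hsub g
    rw [Set.mem_pi]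
    intro i hi
    have hi' : i ∈ F g := hi
    have hmap : l₀.map (fun p : ι × ↥D => (p.1, p.2.1))
        = (F g).toList.map (fun j => (j, d j)) := by
      simp [hl0, List.map_map, Function.comp]
    set L : List (ι × X) := (F g).toList.map (fun j => (j, d j)) with hL
    have hsome : (L.find? (fun p => decide (p.1 = i))).isSome := by
      rw [List.find?_isSome]
      exact ⟨(i, d i), List.mem_map.2 ⟨i, Finset.mem_toList.2 hi', rfl⟩, by simp⟩
    obtain ⟨pr, hp⟩ := Option.isSome_iff_exists.1 hsome
    have hq' := List.find?_some hp
    have hq : pr.1 = i := by simpa using hq'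
    have hpmem : pr ∈ L := List.mem_of_find?_eq_some hp
    obtain ⟨j, hj, hjp⟩ := List.mem_map.1 hpmem
    have hpd : pr = (i, d i) := by
      rw [← hjp] at hq ⊢
      simp only at hq
      rw [hq]
    show pinL (l₀.map (fun p : ι × ↥D => (p.1, p.2.1))) i ∈ W g i
    simp only [pinL, hmap, ← hL, hp, hpd, Option.map_some, Option.getD_some]
    exact hdW i hi'
  · -- pdSpace X ≤ pdSpace (ι → X)
    rintro ⟨U, hU⟩
    let i₀ : ι := Classical.arbitrary ι
    set V : (ι → X) → Set (ι → X) := fun g => (fun h => h i₀) ⁻¹' (U (g i₀)) with hVdef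
    have hV : NbhdAssign V := fun g =>
      ⟨(hU (g i₀)).1.preimage (continuous_apply i₀), (hU (g i₀)).2⟩
    obtain ⟨A, hA, hpin⟩ := pdAssign_attained V hV
    have hBpin : ∀ x, (((fun h : ι → X => h i₀) '' A) ∩ U x).Nonempty := by
      intro x
      obtain ⟨a, haA, hav⟩ := hpin (fun _ => x)
      exact ⟨a i₀, ⟨a, haA, rfl⟩, hav⟩
    have h1 : pdAssign U ≤ #((fun h : ι → X => h i₀) '' A) := csInf_le' ⟨_, rfl, hBpin⟩
    calc pdAssign U ≤ #A := h1.trans Cardinal.mk_image_le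
      _ = pdAssign V := hA
      _ ≤ pdSpace (ι → X) := pdAssign_le_pdSpace V hV
end

section
/- If X and P are both Hausdorff (respectively regular Hausdorff, respectively completely regular Hausdorff), then the generalized cone Z(X,P,p) is Hausdorff (respectively T₃, respectively T₃.₅). -/
open Cardinal Set Topology

universe u v

/-- The underlying set of the generalized cone `Z(X,P,p)`:
`(X × (P \ {p})) ∪ {p}`, with `none` playing the role of the point `p`. -/
def Cone (X P : Type u) (p : P) : Type u := Option (X × {q : P // q ≠ p})

/-- The topology of the generalized cone: points of `X × (P \ {p})` get their product
neighborhoods, and basic neighborhoods of `p` are `(X × (U \ {p})) ∪ {p}` for `U` a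
neighborhood of `p` in `P`. -/
def coneTopology (X P : Type u) [TopologicalSpace X] [TopologicalSpace P] (p : P) :
    TopologicalSpace (Cone X P p) :=
  TopologicalSpace.generateFrom
    ({S | ∃ V : Set (X × {q : P // q ≠ p}), IsOpen V ∧ S = some '' V} ∪
     {S | ∃ U : Set P, IsOpen U ∧ p ∈ U ∧
        S = insert (none : Cone X P p)
          {z : Cone X P p | ∃ (x : X) (q : {q : P // q ≠ p}), (q : P) ∈ U ∧ z = some (x, q)}})

set_option linter.unusedSectionVars false
set_option linter.unusedVariables false

namespace ConeSep

variable {X P : Type u} [TopologicalSpace X] [TopologicalSpace P] {p : P}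

instance coneTop (p : P) : TopologicalSpace (Cone X P p) := coneTopology X P p

/-- Basic neighborhood of the cone point. -/
def nbhd (p : P) (U : Set P) : Set (Cone X P p) :=
  insert (none : Cone X P p)
    {z : Cone X P p | ∃ (x : X) (q : {q : P // q ≠ p}), (q : P) ∈ U ∧ z = some (x, q)}

lemma none_mem_nbhd {U : Set P} : (none : Cone X P p) ∈ nbhd p U := mem_insert _ _

lemma some_mem_nbhd {U : Set P} {w : X × {q : P // q ≠ p}} :
    (some w : Cone X P p) ∈ nbhd p U ↔ (w.2 : P) ∈ U := by
  constructor
  · rintro (h | ⟨x, q, hq, h⟩)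
    · exact absurd h (by simp [Cone])
    · obtain ⟨rfl, rfl⟩ : w.1 = x ∧ w.2 = q := by
        have := Option.some.inj h; exact ⟨congrArg Prod.fst this, congrArg Prod.snd this⟩
      exact hq
  · intro h; exact Or.inr ⟨w.1, w.2, h, rfl⟩

lemma nbhd_mono {U V : Set P} (h : U ⊆ V) : (nbhd p U : Set (Cone X P p)) ⊆ nbhd p V := by
  rintro z (rfl | ⟨x, q, hq, rfl⟩)
  · exact none_mem_nbhd
  · exact Or.inr ⟨x, q, h hq, rfl⟩

lemma some_not_mem_none {w : X × {q : P // q ≠ p}} : (some w : Cone X P p) ≠ none := by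
  simp [Cone]

lemma cone_cases (z : Cone X P p) : z = none ∨ ∃ w : X × {q : P // q ≠ p}, z = some w :=
  match z with
  | Option.none => Or.inl rfl
  | Option.some w => Or.inr ⟨w, rfl⟩

lemma some_inj : Function.Injective (some : X × {q : P // q ≠ p} → Cone X P p) :=
  fun _ _ h => Option.some.inj h

lemma some_mem_image {V : Set (X × {q : P // q ≠ p})} {w : X × {q : P // q ≠ p}} :
    (some w : Cone X P p) ∈ (some '' V : Set (Cone X P p)) ↔ w ∈ V :=
  some_inj.mem_set_image

lemma none_not_mem_image {V : Set (X × {q : P // q ≠ p})} :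
    (none : Cone X P p) ∉ (some '' V : Set (Cone X P p)) :=
  fun ⟨_, _, hv⟩ => some_not_mem_none hv

lemma preimage_image_some (V : Set (X × {q : P // q ≠ p})) :
    (some ⁻¹' (some '' V : Set (Cone X P p))) = V :=
  Set.preimage_image_eq V some_inj

instance coneTop' (p : P) : TopologicalSpace (Option (X × {q : P // q ≠ p})) :=
  coneTopology X P p

lemma isOpen_image_some {V : Set (X × {q : P // q ≠ p})} (hV : IsOpen V) :
    IsOpen (some '' V : Set (Cone X P p)) :=
  TopologicalSpace.GenerateOpen.basic _ (Or.inl ⟨V, hV, rfl⟩)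

lemma isOpen_nbhd {U : Set P} (hU : IsOpen U) (hp : p ∈ U) :
    IsOpen (nbhd p U : Set (Cone X P p)) :=
  TopologicalSpace.GenerateOpen.basic _ (Or.inr ⟨U, hU, hp, rfl⟩)

lemma continuous_some : Continuous (some : X × {q : P // q ≠ p} → Cone X P p) := by
  apply continuous_generateFrom_iff.mpr
  rintro s (⟨V, hV, rfl⟩ | ⟨U, hU, hpU, rfl⟩)
  · rwa [Set.preimage_image_eq V (Option.some_injective _)]
  · have : (some ⁻¹' (nbhd p U) : Set (X × {q : P // q ≠ p})) =
        (fun w : X × {q : P // q ≠ p} => (w.2 : P)) ⁻¹' U := by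
      ext w; exact some_mem_nbhd
    rw [show (insert (none : Cone X P p)
          {z : Cone X P p | ∃ (x : X) (q : {q : P // q ≠ p}), (q : P) ∈ U ∧ z = some (x, q)}) =
        nbhd p U from rfl, this]
    exact hU.preimage (continuous_subtype_val.comp continuous_snd)

lemma isOpenEmbedding_some :
    IsOpenEmbedding (some : X × {q : P // q ≠ p} → Cone X P p) :=
  IsOpenEmbedding.of_continuous_injective_isOpenMap continuous_some
    some_inj (fun V hV => isOpen_image_some hV)

/-- Projection of the cone onto `P`. -/
def pi (p : P) : Cone X P p → P := fun z => Option.elim z p (fun w => (w.2 : P))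

@[simp] lemma pi_none : pi p (none : Cone X P p) = p := rfl
@[simp] lemma pi_some {w : X × {q : P // q ≠ p}} : pi p (some w : Cone X P p) = (w.2 : P) := rfl

lemma continuous_pi : Continuous (pi p : Cone X P p → P) := by
  rw [continuous_def]
  intro W hW
  by_cases hp : p ∈ W
  · have : (pi p ⁻¹' W : Set (Cone X P p)) = nbhd p W := by
      ext z
      rcases cone_cases z with rfl | ⟨w, rfl⟩
      · change p ∈ W ↔ (none : Cone X P p) ∈ nbhd p W
        exact iff_of_true hp none_mem_nbhd
      · change (w.2 : P) ∈ W ↔ (some w : Cone X P p) ∈ nbhd p W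
        exact some_mem_nbhd.symm
    rw [this]; exact isOpen_nbhd hW hp
  · have : (pi p ⁻¹' W : Set (Cone X P p)) =
        some '' {w : X × {q : P // q ≠ p} | (w.2 : P) ∈ W} := by
      ext z
      rcases cone_cases z with rfl | ⟨w, rfl⟩
      · exact iff_of_false hp none_not_mem_image
      · change (w.2 : P) ∈ W ↔ (some w : Cone X P p) ∈ (some '' {w : X × {q : P // q ≠ p} | (w.2 : P) ∈ W} : Set (Cone X P p))
        exact (some_mem_image (V := {w : X × {q : P // q ≠ p} | (w.2 : P) ∈ W})).symm
    rw [this]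
    exact isOpen_image_some (hW.preimage (continuous_subtype_val.comp continuous_snd))



lemma exists_nbhd_subset' {O : Set (Cone X P p)} (hO : IsOpen O) :
    (none : Cone X P p) ∈ O → ∃ U : Set P, IsOpen U ∧ p ∈ U ∧ nbhd p U ⊆ O := by
  have h : TopologicalSpace.GenerateOpen
      ({S | ∃ V : Set (X × {q : P // q ≠ p}), IsOpen V ∧ S = some '' V} ∪
       {S | ∃ U : Set P, IsOpen U ∧ p ∈ U ∧
          S = insert (none : Cone X P p)
            {z : Cone X P p | ∃ (x : X) (q : {q : P // q ≠ p}), (q : P) ∈ U ∧ z = some (x, q)}})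
      O := hO
  clear hO
  induction h with
  | basic s hs =>
    intro hn
    rcases hs with ⟨V, hV, rfl⟩ | ⟨U, hU, hpU, rfl⟩
    · exact absurd hn none_not_mem_image
    · exact ⟨U, hU, hpU, subset_rfl⟩
  | univ => exact fun _ => ⟨Set.univ, isOpen_univ, mem_univ p, subset_univ _⟩
  | inter s t hs ht ihs iht =>
    intro hn
    obtain ⟨U1, hU1, hp1, h1⟩ := ihs hn.1
    obtain ⟨U2, hU2, hp2, h2⟩ := iht hn.2
    exact ⟨U1 ∩ U2, hU1.inter hU2, ⟨hp1, hp2⟩,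
      fun z hz => ⟨h1 (nbhd_mono inter_subset_left hz), h2 (nbhd_mono inter_subset_right hz)⟩⟩
  | sUnion S hS ih =>
    rintro ⟨t, htS, hnt⟩
    obtain ⟨U, hU, hpU, h⟩ := ih t htS hnt
    exact ⟨U, hU, hpU, h.trans (subset_sUnion_of_mem htS)⟩

lemma mem_nhds_none_iff {S : Set (Cone X P p)} :
    S ∈ 𝓝 (none : Cone X P p) ↔ ∃ U : Set P, IsOpen U ∧ p ∈ U ∧ nbhd p U ⊆ S := by
  constructor
  · intro hS
    obtain ⟨O, hOS, hO, hnO⟩ := mem_nhds_iff.mp hS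
    obtain ⟨U, hU, hpU, h⟩ := exists_nbhd_subset' hO hnO
    exact ⟨U, hU, hpU, h.trans hOS⟩
  · rintro ⟨U, hU, hpU, h⟩
    exact mem_nhds_iff.mpr ⟨nbhd p U, h, isOpen_nbhd hU hpU, none_mem_nbhd⟩


theorem coneT2 [T2Space X] [T2Space P] : T2Space (Cone X P p) := by
  constructor
  intro a b hab
  rcases cone_cases a with rfl | ⟨w, rfl⟩ <;> rcases cone_cases b with rfl | ⟨v, rfl⟩
  · exact absurd rfl hab
  · obtain ⟨U, W, hU, hW, hpU, hvW, hUW⟩ := t2_separation (Ne.symm v.2.2)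
    refine ⟨nbhd p U, some '' {u : X × {q : P // q ≠ p} | (u.2 : P) ∈ W},
      isOpen_nbhd hU hpU,
      isOpen_image_some (hW.preimage (continuous_subtype_val.comp continuous_snd)),
      none_mem_nbhd, some_mem_image.mpr hvW, ?_⟩
    rw [Set.disjoint_left]
    rintro z hz ⟨u, hu, rfl⟩
    exact Set.disjoint_left.mp hUW (some_mem_nbhd.mp hz) hu
  · obtain ⟨U, W, hU, hW, hpU, hvW, hUW⟩ := t2_separation (Ne.symm w.2.2)
    refine ⟨some '' {u : X × {q : P // q ≠ p} | (u.2 : P) ∈ W}, nbhd p U,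
      isOpen_image_some (hW.preimage (continuous_subtype_val.comp continuous_snd)),
      isOpen_nbhd hU hpU, some_mem_image.mpr hvW, none_mem_nbhd, ?_⟩
    rw [Set.disjoint_left]
    rintro z ⟨u, hu, rfl⟩ hz
    exact Set.disjoint_left.mp hUW (some_mem_nbhd.mp hz) hu
  · have hwv : w ≠ v := fun h => hab (congrArg _ h)
    obtain ⟨V1, V2, h1, h2, hw1, hv2, h12⟩ := t2_separation hwv
    exact ⟨some '' V1, some '' V2, isOpen_image_some h1, isOpen_image_some h2,
      some_mem_image.mpr hw1, some_mem_image.mpr hv2,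
      (Set.disjoint_image_iff some_inj).mpr h12⟩

theorem coneRegular [T3Space X] [T3Space P] : RegularSpace (Cone X P p) := by
  apply RegularSpace.of_exists_mem_nhds_isClosed_subset
  intro a s hs
  rcases cone_cases a with rfl | ⟨w, rfl⟩
  · obtain ⟨U, hU, hpU, hsub⟩ := mem_nhds_none_iff.mp hs
    obtain ⟨K, hK, hKc, hKU⟩ := exists_mem_nhds_isClosed_subset (hU.mem_nhds hpU)
    refine ⟨pi p ⁻¹' K, continuous_pi.continuousAt.preimage_mem_nhds (by rwa [pi_none]),
      hKc.preimage continuous_pi, ?_⟩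
    intro z hz
    apply hsub
    rcases cone_cases z with rfl | ⟨u, rfl⟩
    · exact none_mem_nbhd
    · exact some_mem_nbhd.mpr (hKU hz)
  · obtain ⟨W, U, hWo, hUo, hwW, hpU, hWU⟩ := t2_separation w.2.2
    have h1 : some ⁻¹' s ∈ 𝓝 w := continuous_some.continuousAt.preimage_mem_nhds hs
    have h2 : ({u : X × {q : P // q ≠ p} | (u.2 : P) ∈ W}) ∈ 𝓝 w :=
      (hWo.preimage (continuous_subtype_val.comp continuous_snd)).mem_nhds hwW
    obtain ⟨t, ht, htc, hts⟩ := exists_mem_nhds_isClosed_subset (Filter.inter_mem h1 h2)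
    refine ⟨some '' t, ?_, ?_, ?_⟩
    · obtain ⟨O, hOt, hOo, hwO⟩ := mem_nhds_iff.mp ht
      exact mem_nhds_iff.mpr ⟨some '' O, image_mono hOt, isOpen_image_some hOo, ⟨w, hwO, rfl⟩⟩
    · rw [← isOpen_compl_iff]
      have : (some '' t : Set (Cone X P p))ᶜ = some '' tᶜ ∪ nbhd p U := by
        ext z
        rcases cone_cases z with rfl | ⟨u, rfl⟩
        · exact iff_of_true none_not_mem_image (Or.inr none_mem_nbhd)
        · constructor
          · intro hz
            exact Or.inl (some_mem_image.mpr (fun hut => hz (some_mem_image.mpr hut)))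
          · rintro (hz | hz)
            · exact fun hK => (some_mem_image.mp hz) (some_mem_image.mp hK)
            · intro hK
              have hut : u ∈ t := some_mem_image.mp hK
              exact Set.disjoint_left.mp hWU (hts hut).2 (some_mem_nbhd.mp hz)
      rw [this]
      exact (isOpen_image_some htc.isOpen_compl).union (isOpen_nbhd hUo hpU)
    · exact (image_mono (hts.trans inter_subset_left)).trans (image_preimage_subset _ _)

theorem coneT3 [T3Space X] [T3Space P] : T3Space (Cone X P p) := by
  haveI : T2Space (Cone X P p) := coneT2
  haveI : RegularSpace (Cone X P p) := coneRegular
  exact T3Space.mk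

theorem coneCR [T35Space X] [T2Space X] [T35Space P] [T2Space P] :
    CompletelyRegularSpace (Cone X P p) := by
  constructor
  intro a K hK ha
  rcases cone_cases a with rfl | ⟨w, rfl⟩
  · -- the cone point
    obtain ⟨U, hUo, hpU, hUK⟩ := mem_nhds_none_iff.mp (hK.isOpen_compl.mem_nhds ha)
    obtain ⟨g, gc, gp0, gU1⟩ := CompletelyRegularSpace.completely_regular (X := P) p Uᶜ
      hUo.isClosed_compl (not_not_intro hpU)
    refine ⟨fun z => g (pi p z), gc.comp continuous_pi, by simpa using gp0, ?_⟩
    intro z hz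
    rcases cone_cases z with rfl | ⟨u, rfl⟩
    · exact absurd hz ha
    · have hu : (u.2 : P) ∉ U := fun h => hUK (some_mem_nbhd.mpr h) hz
      exact gU1 hu
  · -- a point of the product part
    have hKw : some ⁻¹' Kᶜ ∈ 𝓝 w :=
      continuous_some.continuousAt.preimage_mem_nhds (hK.isOpen_compl.mem_nhds ha)
    obtain ⟨u, hu, v, hv, huv⟩ := mem_nhds_prod_iff.mp hKw
    obtain ⟨A, hAu, hAo, hxA⟩ := mem_nhds_iff.mp hu
    obtain ⟨B', hB', hB'v⟩ := (mem_nhds_subtype _ _ _).mp hv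
    obtain ⟨B, hBB', hBo, hqB⟩ := mem_nhds_iff.mp hB'
    have key : ∀ y : X, ∀ r : {q : P // q ≠ p}, y ∈ A → (r : P) ∈ B → (some (y, r) : Cone X P p) ∉ K := by
      intro y r hy hr
      exact huv ⟨hAu hy, hB'v (hBB' hr)⟩
    obtain ⟨f, fc, fx0, fA1⟩ := CompletelyRegularSpace.completely_regular (X := X) w.1 Aᶜ
      hAo.isClosed_compl (not_not_intro hxA)
    obtain ⟨g, gc, gq0, gB1⟩ := CompletelyRegularSpace.completely_regular (X := P) (w.2 : P) Bᶜ
      hBo.isClosed_compl (not_not_intro hqB)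
    obtain ⟨k, kc, kq0, kp1⟩ := CompletelyRegularSpace.completely_regular (X := P) (w.2 : P) {p}
      isClosed_singleton w.2.2
    set F : Cone X P p → ℝ := fun z => Option.elim z 1
      (fun u => max (max (f u.1 : ℝ) (g (u.2 : P) : ℝ)) (k (u.2 : P) : ℝ)) with hF
    have Fnone : F none = 1 := rfl
    have Fsome : ∀ u : X × {q : P // q ≠ p},
        F (some u) = max (max (f u.1 : ℝ) (g (u.2 : P) : ℝ)) (k (u.2 : P) : ℝ) := fun u => rfl
    have Fmem : ∀ z, F z ∈ Set.Icc (0 : ℝ) 1 := by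
      intro z
      rcases cone_cases z with rfl | ⟨u, rfl⟩
      · exact ⟨zero_le_one, le_refl 1⟩
      · rw [Fsome]
        exact ⟨le_trans (f u.1).2.1 (le_max_of_le_left (le_max_left _ _)),
          max_le (max_le (f u.1).2.2 (g (u.2 : P)).2.2) (k (u.2 : P)).2.2⟩
    have Fcont : Continuous F := by
      rw [continuous_iff_continuousAt]
      intro z
      rcases cone_cases z with rfl | ⟨u, rfl⟩
      · -- continuity at the cone point
        unfold ContinuousAt; rw [Fnone]
        have lcont : Continuous fun z : Cone X P p => (k (pi p z) : ℝ) :=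
          continuous_subtype_val.comp (kc.comp continuous_pi)
        have kp : (k (pi p (none : Cone X P p)) : ℝ) = 1 := by
          rw [pi_none]
          exact_mod_cast congrArg Subtype.val (kp1 rfl)
        have ltend : Filter.Tendsto (fun z : Cone X P p => (k (pi p z) : ℝ))
            (𝓝 (none : Cone X P p)) (𝓝 1) := by
          have h := lcont.continuousAt (x := (none : Cone X P p))
          unfold ContinuousAt at h
          rw [← kp]; exact h
        apply tendsto_of_tendsto_of_tendsto_of_le_of_le ltend tendsto_const_nhds
        · intro z
          rcases cone_cases z with rfl | ⟨u, rfl⟩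
          · show (k (pi p (none : Cone X P p)) : ℝ) ≤ F none
            rw [kp, Fnone]
          · show (k (pi p (some u : Cone X P p)) : ℝ) ≤ F (some u)
            rw [Fsome, pi_some]
            exact le_max_right _ _
        · intro z
          exact (Fmem z).2
      · have hc : Continuous fun u : X × {q : P // q ≠ p} =>
            max (max (f u.1 : ℝ) (g (u.2 : P) : ℝ)) (k (u.2 : P) : ℝ) :=
          ((continuous_subtype_val.comp (fc.comp continuous_fst)).max
            (continuous_subtype_val.comp
              (gc.comp (continuous_subtype_val.comp continuous_snd)))).max
            (continuous_subtype_val.comp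
              (kc.comp (continuous_subtype_val.comp continuous_snd)))
        exact isOpenEmbedding_some.continuousAt_iff.mp hc.continuousAt
    refine ⟨fun z => ⟨F z, Fmem z⟩, Fcont.subtype_mk Fmem, ?_, ?_⟩
    · apply Subtype.ext
      show F (some w) = 0
      rw [Fsome]
      have : (f w.1 : ℝ) = 0 := by exact_mod_cast congrArg Subtype.val fx0
      have hg : (g (w.2 : P) : ℝ) = 0 := by exact_mod_cast congrArg Subtype.val gq0
      have hk : (k (w.2 : P) : ℝ) = 0 := by exact_mod_cast congrArg Subtype.val kq0
      rw [this, hg, hk]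
      simp
    · intro z hz
      apply Subtype.ext
      show F z = 1
      rcases cone_cases z with rfl | ⟨u, rfl⟩
      · exact Fnone
      · rw [Fsome]
        have h1 : ¬(u.1 ∈ A ∧ (u.2 : P) ∈ B) := by
          rintro ⟨hy, hr⟩
          exact key u.1 u.2 hy hr hz
        apply le_antisymm (Fmem (some u)).2
        rcases not_and_or.mp h1 with hy | hr
        · have : (f u.1 : ℝ) = 1 := by exact_mod_cast congrArg Subtype.val (fA1 hy)
          calc (1 : ℝ) = (f u.1 : ℝ) := this.symm
            _ ≤ _ := le_max_of_le_left (le_max_left _ _)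
        · have : (g (u.2 : P) : ℝ) = 1 := by exact_mod_cast congrArg Subtype.val (gB1 hr)
          calc (1 : ℝ) = (g (u.2 : P) : ℝ) := this.symm
            _ ≤ _ := le_max_of_le_left (le_max_right _ _)

theorem coneT35 [T35Space X] [T2Space X] [T35Space P] [T2Space P] :
    T35Space (Cone X P p) := by
  haveI : T2Space (Cone X P p) := coneT2
  haveI : CompletelyRegularSpace (Cone X P p) := coneCR
  exact T35Space.mk

end ConeSep

/-- if `X` and `P` are both Hausdorff (resp. regular Hausdorff, resp.
completely regular Hausdorff) then so is the cone `Z(X,P,p)`. -/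
theorem cone_separation (X P : Type u) [TopologicalSpace X] [TopologicalSpace P]
    [T1Space P] [Infinite P] [ConnectedSpace P] (p : P) :
    (∀ (_ : T2Space X) (_ : T2Space P), @T2Space (Cone X P p) (coneTopology X P p)) ∧
    (∀ (_ : T3Space X) (_ : T3Space P), @T3Space (Cone X P p) (coneTopology X P p)) ∧
    (∀ (_ : T35Space X) (_ : T2Space X) (_ : T35Space P) (_ : T2Space P),
      @T35Space (Cone X P p) (coneTopology X P p) ∧
      @T2Space (Cone X P p) (coneTopology X P p)) := by
  refine ⟨fun _ _ => ?_, fun _ _ => ?_, fun _ _ _ _ => ⟨?_, ?_⟩⟩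
  · exact ConeSep.coneT2
  · exact ConeSep.coneT3
  · exact ConeSep.coneT35
  · exact ConeSep.coneT2
end

section
/- Let X be an infinite neat completely regular Hausdorff space. Then the free topological group F(X) and the free abelian topological group A(X) are neat. -/
open Cardinal Set Topology

universe u v

/-- `G`, together with the map `ι : X → G`, is a free topological group on `X`:
`G` is a Hausdorff topological group, `ι` is a closed embedding, `ι(X)` generates `G`
algebraically, and every continuous map from `X` to a topological group `H` extends to a
continuous homomorphism `G → H`. -/
def IsFreeTopGroup (X : Type u) [TopologicalSpace X]
    (G : Type u) [Group G] [TopologicalSpace G] [IsTopologicalGroup G] [T2Space G]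
    (ι : X → G) : Prop :=
  IsClosedEmbedding ι ∧ Subgroup.closure (Set.range ι) = ⊤ ∧
  ∀ (H : Type u) [Group H] [TopologicalSpace H] [IsTopologicalGroup H] [T2Space H]
    (f : X → H), Continuous f → ∃ φ : G →* H, Continuous φ ∧ ∀ x, φ (ι x) = f x

/-- `A`, together with `ι : X → A`, is a free abelian topological group on `X`. -/
def IsFreeAbelianTopGroup (X : Type u) [TopologicalSpace X]
    (A : Type u) [CommGroup A] [TopologicalSpace A] [IsTopologicalGroup A] [T2Space A]
    (ι : X → A) : Prop :=
  IsClosedEmbedding ι ∧ Subgroup.closure (Set.range ι) = ⊤ ∧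
  ∀ (H : Type u) [CommGroup H] [TopologicalSpace H] [IsTopologicalGroup H] [T2Space H]
    (f : X → H), Continuous f → ∃ φ : A →* H, Continuous φ ∧ ∀ x, φ (ι x) = f x


lemma aux_card_free {X G : Type u} [Infinite X] [Group G] (ι : X → G)
    (hinj : Function.Injective ι)
    (hgen : Subgroup.closure (Set.range ι) = ⊤) : #G = #X := by
  apply le_antisymm
  · have hsurj : Function.Surjective (FreeGroup.lift ι : FreeGroup X →* G) := by
      rw [← MonoidHom.range_eq_top, FreeGroup.range_lift_eq_closure, hgen]
    calc #G ≤ #(FreeGroup X) := mk_le_of_surjective hsurj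
      _ ≤ #(List (X × Bool)) := mk_le_of_surjective Quot.mk_surjective
      _ = #(X × Bool) := mk_list_eq_mk _
      _ = #(X ⊕ X) := mk_congr ((Equiv.prodComm _ _).trans (Equiv.boolProdEquivSum X))
      _ = #X := by simp [add_eq_self (aleph0_le_mk X)]
  · exact mk_le_of_injective hinj

lemma aux_neat_free {X G : Type u} [TopologicalSpace X] [Infinite X] [Group G]
    [TopologicalSpace G] [IsTopologicalGroup G] (hneat : Neat X) (ι : X → G)
    (hemb : IsClosedEmbedding ι) (hgen : Subgroup.closure (Set.range ι) = ⊤) : Neat G := by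
  have hcard := aux_card_free ι hemb.injective hgen
  show Delta G = #G
  apply le_antisymm
  · exact csInf_le' ⟨univ, isOpen_univ, univ_nonempty, mk_univ⟩
  · refine le_csInf ⟨#G, ⟨univ, isOpen_univ, univ_nonempty, mk_univ⟩⟩ ?_
    rintro c ⟨O, hO, ⟨g, hg⟩, rfl⟩
    obtain ⟨x₀⟩ : Nonempty X := inferInstance
    set f : X → G := fun y => ι y * (ι x₀)⁻¹ * g with hf
    have hfc : Continuous f := (hemb.continuous.mul continuous_const).mul continuous_const
    have hfinj : Function.Injective f := by
      intro a b h
      exact hemb.injective (by simpa [hf] using h)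
    have hx₀ : x₀ ∈ f ⁻¹' O := by simp [hf, hg]
    have h1 : #X ≤ #(f ⁻¹' O) :=
      hneat ▸ csInf_le' ⟨f ⁻¹' O, hO.preimage hfc, ⟨x₀, hx₀⟩, rfl⟩
    have h2 : #(f ⁻¹' O) ≤ #O := by
      rw [← mk_image_eq (f := f) hfinj]
      exact mk_le_mk_of_subset (image_preimage_subset f O)
    rw [hcard]
    exact h1.trans h2

/-- for an infinite neat completely regular Hausdorff space `X`, the free
topological group `F(X)` and the free abelian topological group `A(X)` are neat. -/
theorem free_topological_group_neat (X : Type u) [TopologicalSpace X] [T35Space X]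
    [T2Space X] [Infinite X] (hneat : Neat X) :
    (∀ (G : Type u) [Group G] [TopologicalSpace G] [IsTopologicalGroup G] [T2Space G]
      (ι : X → G), IsFreeTopGroup X G ι → Neat G) ∧
    (∀ (A : Type u) [CommGroup A] [TopologicalSpace A] [IsTopologicalGroup A] [T2Space A]
      (ι : X → A), IsFreeAbelianTopGroup X A ι → Neat A) := by
  constructor
  · intro G _ _ _ _ ι h
    exact aux_neat_free hneat ι h.1 h.2.1
  · intro A _ _ _ _ ι h
    exact aux_neat_free hneat ι h.1 h.2.1
end

section
/- Let X be an infinite completely regular Hausdorff space. Then d(X) = d(F(X)) = d(A(X)), where F(X) and A(X) are the free and free abelian topological groups on X. -/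
open Cardinal Set Topology

universe u v

section Aux

/-- Any dense subset of an infinite T1 space is infinite. -/
lemma aux_dense_infinite {Y : Type u} [TopologicalSpace Y] [T1Space Y] [Infinite Y]
    {D : Set Y} (hD : Dense D) : ℵ₀ ≤ #D := by
  by_contra h
  push_neg at h
  have hfin : D.Finite := Cardinal.lt_aleph0_iff_set_finite.mp h
  have : closure D = D := hfin.isClosed.closure_eq
  have huniv : (Set.univ : Set Y) = D := by
    rw [← hD.closure_eq, this]
  exact Set.infinite_univ (huniv ▸ hfin)

lemma aux_density_le {Y : Type u} [TopologicalSpace Y] {D : Set Y} (hD : Dense D) :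
    density Y ≤ #D :=
  csInf_le' ⟨D, rfl, hD⟩

lemma aux_exists_dense (Y : Type u) [TopologicalSpace Y] :
    ∃ D : Set Y, #D = density Y ∧ Dense D := by
  have hne : {c | ∃ D : Set Y, #D = c ∧ Dense D}.Nonempty :=
    ⟨#(Set.univ : Set Y), Set.univ, rfl, dense_univ⟩
  obtain ⟨D, hD, hdense⟩ := csInf_mem hne
  exact ⟨D, hD, hdense⟩

/-- The cardinality of the subgroup generated by a set. -/
lemma aux_mk_closure_le {G : Type u} [Group G] (s : Set G) :
    #(Subgroup.closure s : Set G) ≤ max #s ℵ₀ := by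
  rcases s.eq_empty_or_nonempty with rfl | hne
  · rw [Subgroup.closure_empty]
    refine le_trans ?_ (le_max_right _ _)
    rw [Subgroup.coe_bot, Cardinal.mk_singleton]
    exact Cardinal.one_le_aleph0
  · have : Nonempty s := hne.to_subtype
    have hsur : Function.Surjective
        ((FreeGroup.lift (fun x : s => (x : G))).rangeRestrict) :=
      (FreeGroup.lift _).rangeRestrict_surjective
    have hrange : (FreeGroup.lift (fun x : s => (x : G))).range = Subgroup.closure s := by
      rw [FreeGroup.range_lift_eq_closure, Subtype.range_coe]
    have h1 : #(Subgroup.closure s : Set G) ≤ #(FreeGroup s) := by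
      have := Cardinal.mk_le_of_surjective hsur
      rwa [hrange] at this
    calc #(Subgroup.closure s : Set G) ≤ #(FreeGroup s) := h1
      _ = max #s ℵ₀ := Cardinal.mk_freeGroup (α := ↥s)

/-- Direction 1: the density of the group is at most the density of `X`. -/
lemma aux_density_group_le {X : Type u} [TopologicalSpace X] [T1Space X] [Infinite X]
    {G : Type u} [Group G] [TopologicalSpace G] [IsTopologicalGroup G]
    {ι : X → G} (hι : Continuous ι) (htop : Subgroup.closure (Set.range ι) = ⊤) :
    density G ≤ density X := by
  obtain ⟨D, hDcard, hDdense⟩ := aux_exists_dense X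
  have hDinf : ℵ₀ ≤ #D := aux_dense_infinite hDdense
  set K := Subgroup.closure (ι '' D) with hK
  have hrange : Set.range ι ⊆ closure (K : Set G) := by
    intro g hg
    obtain ⟨x, rfl⟩ := hg
    have hx : x ∈ closure D := by rw [hDdense.closure_eq]; trivial
    have h1 : ι x ∈ ι '' closure D := ⟨x, hx, rfl⟩
    have h2 : ι '' closure D ⊆ closure (ι '' D) := image_closure_subset_closure_image hι
    exact closure_mono (Subgroup.subset_closure) (h2 h1)
  have hdenseK : Dense (K : Set G) := by
    have hle : Subgroup.closure (Set.range ι) ≤ K.topologicalClosure :=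
      (Subgroup.closure_le _).mpr hrange
    rw [htop] at hle
    have : (K.topologicalClosure : Set G) = Set.univ := by
      rw [Set.eq_univ_iff_forall]; exact fun g => hle trivial
    rw [dense_iff_closure_eq]
    exact this
  have hcard : #(K : Set G) ≤ #D := by
    refine le_trans (aux_mk_closure_le _) ?_
    exact max_le Cardinal.mk_image_le hDinf
  calc density G ≤ #(K : Set G) := aux_density_le hdenseK
    _ ≤ #D := hcard
    _ = density X := hDcard

/-- Direction 2: the density of `X` is at most the density of the group,
using only the extension property for maps into `Multiplicative (ULift ℝ)`. -/
lemma aux_density_le_group {X : Type u} [TopologicalSpace X] [T35Space X] [Infinite X]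
    {G : Type u} [Group G] [TopologicalSpace G] [T2Space G]
    {ι : X → G} (hinj : Function.Injective ι)
    (htop : Subgroup.closure (Set.range ι) = ⊤)
    (huniv : ∀ f : X → Multiplicative (ULift.{u} ℝ), Continuous f →
      ∃ φ : G →* Multiplicative (ULift.{u} ℝ), Continuous φ ∧ ∀ x, φ (ι x) = f x) :
    density X ≤ density G := by
  have : Infinite G := Infinite.of_injective ι hinj
  obtain ⟨D, hDcard, hDdense⟩ := aux_exists_dense G
  have hDinf : ℵ₀ ≤ #D := aux_dense_infinite hDdense
  -- each element of G lies in the subgroup generated by finitely many letters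
  have key : ∀ g : G, ∃ s : Set X, s.Finite ∧ g ∈ Subgroup.closure (ι '' s) := by
    intro g
    have hg : g ∈ Subgroup.closure (Set.range ι) := by rw [htop]; trivial
    refine Subgroup.closure_induction (p := fun g _ => ∃ s : Set X, s.Finite ∧
      g ∈ Subgroup.closure (ι '' s)) ?_ ?_ ?_ ?_ hg
    · rintro _ ⟨x, rfl⟩
      exact ⟨{x}, Set.finite_singleton x,
        Subgroup.subset_closure ⟨x, Set.mem_singleton x, rfl⟩⟩
    · exact ⟨∅, Set.finite_empty, one_mem _⟩
    · rintro a b _ _ ⟨s, hs, has⟩ ⟨t, ht, hbt⟩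
      refine ⟨s ∪ t, hs.union ht, mul_mem ?_ ?_⟩
      · exact Subgroup.closure_mono (Set.image_mono Set.subset_union_left) has
      · exact Subgroup.closure_mono (Set.image_mono Set.subset_union_right) hbt
    · rintro a _ ⟨s, hs, has⟩
      exact ⟨s, hs, inv_mem has⟩
  choose w hwfin hwmem using key
  set S : Set X := ⋃ d ∈ D, w d with hS
  have hScard : #S ≤ #D := by
    have h1 : #S ≤ #D * ⨆ d : D, #(w (d : G)) := Cardinal.mk_biUnion_le w D
    have h2 : ⨆ d : D, #(w (d : G)) ≤ ℵ₀ :=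
      ciSup_le' fun d => ((hwfin (d : G)).lt_aleph0).le
    calc #S ≤ #D * ℵ₀ := h1.trans (mul_le_mul_right h2 _)
      _ = #D := Cardinal.mul_aleph0_eq hDinf
  have hSdense : Dense S := by
    rw [dense_iff_closure_eq, Set.eq_univ_iff_forall]
    intro x
    by_contra hx
    obtain ⟨f, hfc, hfx, hfK⟩ :=
      CompletelyRegularSpace.completely_regular x (closure S) isClosed_closure hx
    -- build a continuous map into Multiplicative (ULift ℝ)
    set g : X → Multiplicative (ULift.{u} ℝ) :=
      fun y => Multiplicative.ofAdd (ULift.up (1 - (f y : ℝ))) with hg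
    have hgc : Continuous g := by
      apply Continuous.comp (continuous_ofAdd)
      exact continuous_uliftUp.comp ((continuous_const.sub
        (continuous_subtype_val.comp hfc)))
    obtain ⟨φ, hφc, hφι⟩ := huniv g hgc
    have hker : ∀ y ∈ S, φ (ι y) = 1 := by
      intro y hy
      have hy' : y ∈ closure S := subset_closure hy
      have : f y = 1 := hfK hy'
      rw [hφι, hg]
      simp only [this]
      norm_num
      rfl
    have hDone : ∀ d ∈ D, φ d = 1 := by
      intro d hd
      have hle : Subgroup.closure (ι '' w d) ≤ φ.ker := by
        rw [Subgroup.closure_le]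
        rintro _ ⟨y, hy, rfl⟩
        have hyS : y ∈ S := Set.mem_biUnion hd hy
        exact hker y hyS
      exact hle (hwmem d)
    have hclosed : IsClosed {a : G | φ a = 1} := by
      have h1 : IsClosed {a : Multiplicative (ULift.{u} ℝ) | a = 1} := by
        have : T1Space (Multiplicative (ULift.{u} ℝ)) := inferInstanceAs (T1Space (ULift.{u} ℝ))
        exact isClosed_singleton (x := (1 : Multiplicative (ULift.{u} ℝ)))
      exact h1.preimage hφc
    have hsub : D ⊆ {a : G | φ a = 1} := hDone
    have hall : ∀ a : G, φ a = 1 := by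
      intro a
      have : closure D ⊆ {a : G | φ a = 1} := closure_minimal hsub hclosed
      exact this (hDdense.closure_eq ▸ Set.mem_univ a)
    have hx1 : φ (ι x) = 1 := hall _
    rw [hφι, hg] at hx1
    simp only [hfx] at hx1
    have h2 : (1 - ((0 : unitInterval) : ℝ)) = 0 := by
      have := congrArg (fun a => (Multiplicative.toAdd a).down) hx1
      simp at this
    norm_num at h2
  calc density X ≤ #S := aux_density_le hSdense
    _ ≤ #D := hScard
    _ = density G := hDcard

end Aux

/-- for an infinite completely regular Hausdorff space `X`,
`d(X) = d(F(X)) = d(A(X))`. -/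
theorem free_topological_group_density (X : Type u) [TopologicalSpace X] [T35Space X]
    [T2Space X] [Infinite X] :
    (∀ (G : Type u) [Group G] [TopologicalSpace G] [IsTopologicalGroup G] [T2Space G]
      (ι : X → G), IsFreeTopGroup X G ι → density X = density G) ∧
    (∀ (A : Type u) [CommGroup A] [TopologicalSpace A] [IsTopologicalGroup A] [T2Space A]
      (ι : X → A), IsFreeAbelianTopGroup X A ι → density X = density A) := by
  constructor
  · intro G _ _ _ _ ι h
    obtain ⟨hemb, htop, huniv⟩ := h
    exact le_antisymm
      (aux_density_le_group hemb.injective htop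
        (fun f hf => huniv (Multiplicative (ULift.{u} ℝ)) f hf))
      (aux_density_group_le hemb.continuous htop)
  · intro A _ _ _ _ ι h
    obtain ⟨hemb, htop, huniv⟩ := h
    exact le_antisymm
      (aux_density_le_group hemb.injective htop
        (fun f hf => huniv (Multiplicative (ULift.{u} ℝ)) f hf))
      (aux_density_group_le hemb.continuous htop)
end
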